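/- (Non-collapsing gradients, single-view form of Proposition 1.) Let K > 1, let s ∈ ℝ^K be a logit vector, and let p⁺ ∈ ℝ^K be a probability vector with p⁺ ≠ u_K (the sharpened target is not uniform). Then the sum of the Euclidean norm of the gradient at s of s ↦ H(p⁺, softmax s) and the Euclidean norm of the gradient at s of s ↦ H(softmax s) is strictly positive; equivalently, at least one of these two gradients is nonzero. -/

import Mathlib

open Real BigOperators

/-- The softmax map on `ℝ^K`. -/
noncomputable def softmax {K : ℕ} (s : EuclideanSpace ℝ (Fin K)) : EuclideanSpace ℝ (Fin K) :=
  (WithLp.equiv 2 (Fin K → ℝ)).symm fun k => Real.exp (s k) / ∑ j, Real.exp (s j)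

/-- Cross-entropy `H(p, q) = -∑ k, p k * log (q k)`. -/
noncomputable def crossEntropy {K : ℕ} (p q : EuclideanSpace ℝ (Fin K)) : ℝ :=
  -∑ k, p k * Real.log (q k)

/-- Entropy `H(p) = -∑ k, p k * log (p k)`. -/
noncomputable def entropy {K : ℕ} (p : EuclideanSpace ℝ (Fin K)) : ℝ :=
  -∑ k, p k * Real.log (p k)

/-- A probability vector: nonnegative components summing to 1. -/
def IsProbVec {K : ℕ} (p : EuclideanSpace ℝ (Fin K)) : Prop :=
  (∀ k, 0 ≤ p k) ∧ ∑ k, p k = 1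

/-- The uniform distribution `u_K`, with every component `1/K`. -/
noncomputable def uniformDist (K : ℕ) : EuclideanSpace ℝ (Fin K) :=
  (WithLp.equiv 2 (Fin K → ℝ)).symm fun _ => 1 / (K : ℝ)

/-! Write `q = softmax s` and `LSE s = log ∑ j, exp (s j)`. Since `log q k = s k - LSE s`,
`H(p⁺, q) = LSE s - ∑ k, p⁺ k * s k` and `H(q) = LSE s - ∑ k, q k * s k`, while `∇ LSE = q`.
Hence the cross-entropy gradient is `q - p⁺`, and the entropy gradient is
`q ⊙ (⟪q, s⟫ - s)`, which vanishes only if `s` is constant, i.e. only if `q = u_K`.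
So if `q = u_K` then `q ≠ p⁺` and the first gradient is nonzero; otherwise the second is. -/

section Softmax

open EuclideanSpace

variable {K : ℕ}

lemma softmax_apply (s : EuclideanSpace ℝ (Fin K)) (k : Fin K) :
    softmax s k = exp (s k) / ∑ j, exp (s j) := rfl

lemma hasGradientAt_toLp_of_hasFDerivAt {f : EuclideanSpace ℝ (Fin K) → ℝ} {g : Fin K → ℝ}
    {s : EuclideanSpace ℝ (Fin K)} (h : HasFDerivAt f (∑ j, g j • proj (𝕜 := ℝ) j) s) :
    HasGradientAt f (WithLp.toLp 2 g) s := by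
  rw [hasGradientAt_iff_hasFDerivAt]
  refine h.congr_fderiv ?_
  ext v
  simp [PiLp.inner_apply, mul_comm]

lemma softmax_eq_uniformDist_of_forall_eq {s : EuclideanSpace ℝ (Fin K)} {c : ℝ}
    (h : ∀ i, s i = c) : softmax s = uniformDist K := by
  ext k
  simp only [softmax_apply, h, Finset.sum_const, Finset.card_univ, Fintype.card_fin, nsmul_eq_mul]
  field_simp
  rfl

noncomputable def logSumExp (t : EuclideanSpace ℝ (Fin K)) : ℝ :=
  log (∑ j, exp (t j))

variable [NeZero K]

lemma sum_exp_pos (t : EuclideanSpace ℝ (Fin K)) : 0 < ∑ j, exp (t j) :=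
  Finset.sum_pos (fun _ _ => exp_pos _) Finset.univ_nonempty

lemma sum_softmax (t : EuclideanSpace ℝ (Fin K)) : ∑ k, softmax t k = 1 := by
  simp only [softmax_apply, ← Finset.sum_div, div_self (sum_exp_pos t).ne']

lemma softmax_apply_eq_exp (t : EuclideanSpace ℝ (Fin K)) (k : Fin K) :
    softmax t k = exp (t k - logSumExp t) := by
  rw [exp_sub, logSumExp, exp_log (sum_exp_pos t), softmax_apply]

lemma softmax_pos (t : EuclideanSpace ℝ (Fin K)) (k : Fin K) : 0 < softmax t k := by
  rw [softmax_apply_eq_exp]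
  exact exp_pos _

lemma crossEntropy_softmax (p t : EuclideanSpace ℝ (Fin K)) :
    crossEntropy p (softmax t) = (∑ k, p k) * logSumExp t - ∑ k, p k * t k := by
  simp only [crossEntropy, softmax_apply_eq_exp, log_exp, mul_sub, Finset.sum_sub_distrib,
    Finset.sum_mul]
  ring

lemma entropy_softmax (t : EuclideanSpace ℝ (Fin K)) :
    entropy (softmax t) = logSumExp t - ∑ k, softmax t k * t k := by
  rw [entropy, ← crossEntropy, crossEntropy_softmax, sum_softmax, one_mul]

lemma hasFDerivAt_logSumExp (s : EuclideanSpace ℝ (Fin K)) :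
    HasFDerivAt logSumExp (∑ j, softmax s j • proj (𝕜 := ℝ) j) s := by
  have hsum : HasFDerivAt (fun t : EuclideanSpace ℝ (Fin K) => ∑ j, exp (t j))
      (∑ j, exp (s j) • proj (𝕜 := ℝ) j) s :=
    HasFDerivAt.fun_sum fun j _ => (PiLp.hasFDerivAt_apply 2 s j).exp
  refine (hsum.log (sum_exp_pos s).ne').congr_fderiv ?_
  simp only [Finset.smul_sum, smul_smul, softmax_apply, div_eq_inv_mul]

lemma hasFDerivAt_softmax_apply (s : EuclideanSpace ℝ (Fin K)) (k : Fin K) :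
    HasFDerivAt (fun t => softmax t k)
      (softmax s k • (proj (𝕜 := ℝ) k - ∑ j, softmax s j • proj (𝕜 := ℝ) j)) s := by
  simpa only [← softmax_apply_eq_exp] using
    ((PiLp.hasFDerivAt_apply 2 s k).fun_sub (hasFDerivAt_logSumExp s)).exp

lemma hasGradientAt_crossEntropy_softmax {p : EuclideanSpace ℝ (Fin K)} (hp : ∑ k, p k = 1)
    (s : EuclideanSpace ℝ (Fin K)) :
    HasGradientAt (fun t => crossEntropy p (softmax t)) (softmax s - p) s := by
  simp only [crossEntropy_softmax, hp, one_mul]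
  have hlin : HasFDerivAt (fun t : EuclideanSpace ℝ (Fin K) => ∑ k, p k * t k)
      (∑ k, p k • proj (𝕜 := ℝ) k) s :=
    HasFDerivAt.fun_sum fun k _ => (PiLp.hasFDerivAt_apply 2 s k).const_mul (p k)
  exact hasGradientAt_toLp_of_hasFDerivAt (g := fun k => softmax s k - p k) <|
    ((hasFDerivAt_logSumExp s).sub hlin).congr_fderiv <| by
      simp only [← Finset.sum_sub_distrib, sub_smul]

lemma hasGradientAt_entropy_softmax (s : EuclideanSpace ℝ (Fin K)) :
    HasGradientAt (fun t => entropy (softmax t))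
      (WithLp.toLp 2 fun i => softmax s i * (∑ k, softmax s k * s k - s i)) s := by
  simp only [entropy_softmax]
  have hmean : HasFDerivAt (fun t : EuclideanSpace ℝ (Fin K) => ∑ k, softmax t k * t k)
      (∑ k, (softmax s k • proj (𝕜 := ℝ) k +
        s k • softmax s k • (proj (𝕜 := ℝ) k - ∑ j, softmax s j • proj (𝕜 := ℝ) j))) s :=
    HasFDerivAt.fun_sum fun k _ =>
      (hasFDerivAt_softmax_apply s k).mul (PiLp.hasFDerivAt_apply 2 s k)
  refine hasGradientAt_toLp_of_hasFDerivAt (((hasFDerivAt_logSumExp s).sub hmean).congr_fderiv ?_)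
  ext v
  simp only [sub_apply, add_apply, smul_apply, FunLike.coe_sum, Finset.sum_apply,
    coe_proj, smul_eq_mul]
  simp only [mul_sub, sub_mul, Finset.sum_sub_distrib, Finset.sum_add_distrib]
  set q := softmax s
  set qv := ∑ c, q c * v c
  set qs := ∑ c, q c * s c
  have h1 : ∑ x, s x * (q x * qv) = qs * qv := by
    rw [Finset.sum_mul]; exact Finset.sum_congr rfl fun _ _ => by ring
  have h2 : ∑ x, q x * qs * v x = qs * qv := by
    rw [Finset.mul_sum]; exact Finset.sum_congr rfl fun _ _ => by ring
  have h3 : ∑ x, q x * s x * v x = ∑ x, s x * (q x * v x) :=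
    Finset.sum_congr rfl fun _ _ => by ring
  rw [h1, h2, h3]
  ring

lemma gradient_entropy_softmax_ne_zero {s : EuclideanSpace ℝ (Fin K)}
    (hs : softmax s ≠ uniformDist K) : gradient (fun t => entropy (softmax t)) s ≠ 0 := by
  rw [(hasGradientAt_entropy_softmax s).gradient]
  intro h0
  refine hs (softmax_eq_uniformDist_of_forall_eq (c := ∑ k, softmax s k * s k) fun i => ?_)
  have hi : softmax s i * (∑ k, softmax s k * s k - s i) = 0 := congrArg (· i) h0
  linarith [(mul_eq_zero.mp hi).resolve_left (softmax_pos s i).ne']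

end Softmax

/-- Non-collapsing gradients, single-view form of Proposition 1: for `K > 1`,
logits `s ∈ ℝ^K` and a probability vector `p⁺ ≠ u_K`, the sum of the Euclidean norms of the
gradients at `s` of `s ↦ H(p⁺, softmax s)` and of `s ↦ H(softmax s)` is strictly positive. -/
theorem noncollapsing_gradients_single_view (K : ℕ) (hK : 1 < K)
    (s psharp : EuclideanSpace ℝ (Fin K)) (hp : IsProbVec psharp)
    (hne : psharp ≠ uniformDist K) :
    0 < ‖gradient (fun s => crossEntropy psharp (softmax s)) s‖ +
        ‖gradient (fun s => entropy (softmax s)) s‖ := by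
  have : NeZero K := ⟨by omega⟩
  by_cases hs : softmax s = uniformDist K
  · have hce : softmax s - psharp ≠ 0 := sub_ne_zero.mpr (hs ▸ hne.symm)
    rw [(hasGradientAt_crossEntropy_softmax hp.2 s).gradient]
    exact add_pos_of_pos_of_nonneg (norm_pos_iff.mpr hce) (norm_nonneg _)
  · exact add_pos_of_nonneg_of_pos (norm_nonneg _)
      (norm_pos_iff.mpr (gradient_entropy_softmax_ne_zero hs))
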